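/- arXiv:2310.08920 — 5 statements merged into one kernel-verified Lean document; each statement's English description precedes it below -/
import Mathlib

section
/- Impossibility Theorem (Theorem 2, finite version): There exists a function Erase : 𝒳 → 𝒳, depending only on f and μ, with the following property. For every type K, every key k : K, every watermarking function g : 𝒞 → K → 𝒳, every detection function Detect : 𝒳 → K → Bool, and all reals ε ≥ 0 and ε' ≥ 0, if (i) E_{c~μ}[L(g c k, c) − L(f c, c)] ≤ ε, (ii) Detect (f c) k = false for every c in the support of μ, and (iii) E_{c~μ}[dist(f c, g c k)] ≤ ε', then: Detect (Erase (g c k)) k = false for every c in the support of μ, and E_{c~μ}[L(Erase (g c k), c) − L(f c, c)] ≤ ε + ε'. -/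
/-- Impossibility Theorem (Theorem 2, finite version): there exists a universal
erasing function, depending only on `f` and `μ`, that erases any reliable
watermark while increasing the expected loss by at most `ε'`. -/
theorem impossibility_theorem {𝒳 𝒞 : Type*} [Fintype 𝒳] [Nonempty 𝒳]
    [MetricSpace 𝒳] [Fintype 𝒞] (μ : PMF 𝒞) (f : 𝒞 → 𝒳) (L : 𝒳 → 𝒞 → ℝ)
    (hL : ∀ c, LipschitzWith 1 (fun x => L x c)) :
    ∃ Erase : 𝒳 → 𝒳,
      ∀ (K : Type*) (k : K) (g : 𝒞 → K → 𝒳) (Detect : 𝒳 → K → Bool) (ε ε' : ℝ),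
        0 ≤ ε → 0 ≤ ε' →
        (∑ c, (μ c).toReal * (L (g c k) c - L (f c) c)) ≤ ε →
        (∀ c ∈ μ.support, Detect (f c) k = false) →
        (∑ c, (μ c).toReal * dist (f c) (g c k)) ≤ ε' →
        (∀ c ∈ μ.support, Detect (Erase (g c k)) k = false) ∧
        (∑ c, (μ c).toReal * (L (Erase (g c k)) c - L (f c) c)) ≤ ε + ε' := by
  classical
  have hsupp : μ.support.Nonempty := μ.support_nonempty
  have hfin : μ.support.Finite := Set.toFinite _
  set S : Finset 𝒳 := hfin.toFinset.image f with hS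
  have hSne : S.Nonempty := by
    obtain ⟨c, hc⟩ := hsupp
    exact ⟨f c, Finset.mem_image.mpr ⟨c, hfin.mem_toFinset.mpr hc, rfl⟩⟩
  have hmin : ∀ x : 𝒳, ∃ y ∈ S, ∀ z ∈ S, dist x y ≤ dist x z := fun x =>
    S.exists_min_image (dist x) hSne
  choose Erase hEraseMem hEraseMin using hmin
  refine ⟨Erase, fun K k g Detect ε ε' hε hε' hloss hdet hdist => ?_⟩
  -- key pointwise facts
  have hE : ∀ x : 𝒳, ∃ c ∈ μ.support, Erase x = f c := by
    intro x
    obtain ⟨c, hc, hfc⟩ := Finset.mem_image.mp (hEraseMem x)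
    exact ⟨c, hfin.mem_toFinset.mp hc, hfc.symm⟩
  constructor
  · intro c hc
    obtain ⟨c', hc', hEq⟩ := hE (g c k)
    rw [hEq]; exact hdet c' hc'
  · have hterm : ∀ c : 𝒞,
        (μ c).toReal * (L (Erase (g c k)) c - L (f c) c) ≤
          (μ c).toReal * (L (g c k) c - L (f c) c)
            + (μ c).toReal * dist (f c) (g c k) := by
      intro c
      by_cases hc : μ c = 0
      · simp [hc]
      · have hcs : c ∈ μ.support := by simpa [PMF.mem_support_iff] using hc
        have h1 : dist (g c k) (Erase (g c k)) ≤ dist (g c k) (f c) :=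
          hEraseMin (g c k) (f c)
            (Finset.mem_image.mpr ⟨c, hfin.mem_toFinset.mpr hcs, rfl⟩)
        have h2 : L (Erase (g c k)) c - L (g c k) c ≤
            dist (Erase (g c k)) (g c k) := by
          have := (hL c).dist_le_mul (Erase (g c k)) (g c k)
          rw [NNReal.coe_one, one_mul] at this
          calc L (Erase (g c k)) c - L (g c k) c
              ≤ |L (Erase (g c k)) c - L (g c k) c| := le_abs_self _
            _ = dist (L (Erase (g c k)) c) (L (g c k) c) := (Real.dist_eq _ _).symm
            _ ≤ dist (Erase (g c k)) (g c k) := this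
        have h3 : L (Erase (g c k)) c - L (f c) c ≤
            (L (g c k) c - L (f c) c) + dist (f c) (g c k) := by
          have h4 : dist (g c k) (f c) = dist (f c) (g c k) := dist_comm _ _
          have h5 := (h2.trans (dist_comm (Erase (g c k)) (g c k)).le).trans h1
          linarith
        have hnn : (0:ℝ) ≤ (μ c).toReal := ENNReal.toReal_nonneg
        calc (μ c).toReal * (L (Erase (g c k)) c - L (f c) c)
            ≤ (μ c).toReal * ((L (g c k) c - L (f c) c) + dist (f c) (g c k)) :=
              mul_le_mul_of_nonneg_left h3 hnn
          _ = _ := by ring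
    calc (∑ c, (μ c).toReal * (L (Erase (g c k)) c - L (f c) c))
        ≤ ∑ c, ((μ c).toReal * (L (g c k) c - L (f c) c)
            + (μ c).toReal * dist (f c) (g c k)) :=
          Finset.sum_le_sum fun c _ => hterm c
      _ = (∑ c, (μ c).toReal * (L (g c k) c - L (f c) c))
            + ∑ c, (μ c).toReal * dist (f c) (g c k) := Finset.sum_add_distrib
      _ ≤ ε + ε' := add_le_add hloss hdist
end

section
/- Counterexample to Theorem 2 without the closeness assumption (Eq. (7)): Fix a real M > 0. Let 𝒳 = {x0, x1, x2} (a three-element type), 𝒞 = {c0, c1}, and μ the uniform PMF on 𝒞. Define L : 𝒳 → 𝒞 → ℝ by L(x0,c0) = 0, L(x1,c0) = M, L(x2,c0) = 0, L(x0,c1) = M, L(x1,c1) = 0, L(x2,c1) = 0. Define f(c0) = x0, f(c1) = x1, g(c) = x2 for all c, and Detect(x) = true iff x = x2. Then: (i) Detect(f c) = false for all c and Detect(g c) = true for all c; (ii) E_{c~μ}[L(f c, c)] = 0 and E_{c~μ}[L(g c, c)] = 0; and (iii) for every function Erase : 𝒳 → 𝒳, either Detect(Erase(x2)) = true, or E_{c~μ}[L(Erase(g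 c), c) − L(f c, c)] ≥ M/2. -/
/-- Counterexample to Theorem 2 without the closeness assumption (Eq. (7)).
`𝒳 = Fin 3` (texts `x0, x1, x2`), `𝒞 = Fin 2` (conditions `c0, c1`) with the
uniform PMF.  A finite `M > 0` plays the role of `∞`. -/
theorem counterexample_no_closeness (M : ℝ) (hM : 0 < M)
    (μ : PMF (Fin 2)) (hμ : μ = PMF.uniformOfFintype (Fin 2))
    (L : Fin 3 → Fin 2 → ℝ) (hL : L = fun x c => !![0, M; M, 0; 0, 0] x c)
    (f : Fin 2 → Fin 3) (hf : f = ![0, 1])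
    (g : Fin 2 → Fin 3) (hg : g = fun _ => 2)
    (Detect : Fin 3 → Bool) (hD : Detect = fun x => decide (x = 2)) :
    (∀ c, Detect (f c) = false) ∧ (∀ c, Detect (g c) = true) ∧
    (∑ c, (μ c).toReal * L (f c) c = 0) ∧
    (∑ c, (μ c).toReal * L (g c) c = 0) ∧
    ∀ Erase : Fin 3 → Fin 3,
      Detect (Erase 2) = true ∨
      M / 2 ≤ ∑ c, (μ c).toReal * (L (Erase (g c)) c - L (f c) c) := by
  subst hμ hL hf hg hD
  have hμval : ∀ c : Fin 2, ((PMF.uniformOfFintype (Fin 2)) c).toReal = 1 / 2 := by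
    intro c
    simp [PMF.uniformOfFintype_apply, ENNReal.toReal_inv]
  refine ⟨by decide, by decide, ?_, ?_, ?_⟩
  · simp [Fin.sum_univ_two, hμval]
  · simp [Fin.sum_univ_two, hμval]
  · intro Erase
    by_cases h2 : Erase 2 = 2
    · left; simp [h2]
    · right
      have : Erase 2 = 0 ∨ Erase 2 = 1 := by omega
      rcases this with h | h <;>
        simp [Fin.sum_univ_two, hμval, h] <;> linarith
end

section
/- Extended impossibility theorem (Theorem 3, finite version): Let q be a PMF on 𝒳 and ε' ≥ 0, and suppose there exists g̃ : 𝒞 → 𝒳 such that μ.map g̃ = q and E_{c~μ}[dist(f c, g̃ c)] ≤ ε'. Then there exists a randomized erasing function Erase : 𝒳 → PMF 𝒳, depending only on f, μ, and q, such that for every g : 𝒞 → 𝒳 with μ.map g = q, every Detect : 𝒳 → Bool, every ε ≥ 0, and every δ ∈ [0,1]: if E_{c~μ}[L(g c, c) − L(f c, c)] ≤ ε and Pr_{c~μ}[Detect(f c) = false] ≥ 1 − δ, then Σ_c μ(c) · Σ_x (Erase(g c))(x) · [Detect(x) = false] ≥ 1 − δ, and Σ_c μ(c) · Σ_x (Erase(g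 c))(x) · (L(x, c) − L(f c, c)) ≤ ε + ε'. -/
/-!
Take `Erase y` to be the law of `f c`, `c ~ μ`, conditioned on `g̃ c = y`. Since `g` has the
same law `q` as `g̃`, the pair `(x, g c)` with `x ~ Erase (g c)` has the same joint law as
`(f c, g̃ c)`. Hence erased samples are flagged exactly as often as the outputs of `f`, and, `L`
being 1-Lipschitz, their expected loss exceeds that of `g` by at most
`E[dist (f c) (g̃ c)] ≤ ε'`.
-/

open Finset

namespace PMF

variable {α β γ : Type*}

theorem sum_toReal_eq_one [Fintype α] (p : PMF α) : ∑ a, (p a).toReal = 1 := by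
  rw [← ENNReal.toReal_sum fun a _ => p.apply_ne_top a, ← tsum_fintype (L := .unconditional _),
    p.tsum_coe, ENNReal.toReal_one]

theorem toReal_map_apply [Fintype α] [DecidableEq β] (p : PMF α) (g : α → β) (b : β) :
    (p.map g b).toReal = ∑ a with g a = b, (p a).toReal := by
  rw [map_apply, tsum_fintype, ENNReal.toReal_sum fun a _ => by split_ifs <;> simp [apply_ne_top],
    sum_filter]
  exact sum_congr rfl fun a _ => by split_ifs <;> simp_all [eq_comm]

theorem sum_map_toReal_mul [Fintype α] [Fintype β] (p : PMF α) (g : α → β) (F : β → ℝ) :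
    ∑ b, (p.map g b).toReal * F b = ∑ a, (p a).toReal * F (g a) := by
  classical
  simp_rw [toReal_map_apply, sum_mul]
  rw [← sum_fiberwise univ g fun a => (p a).toReal * F (g a)]
  exact sum_congr rfl fun b _ => sum_congr rfl fun a ha => by rw [(mem_filter.1 ha).2]

theorem toReal_toOuterMeasure_mul_sum_filter [Fintype α] (p : PMF α) {s : Set α}
    (h : ∃ a ∈ s, a ∈ p.support) (F : α → ℝ) :
    (p.toOuterMeasure s).toReal * ∑ a, (p.filter s h a).toReal * F a
      = ∑ a, (s.indicator p a).toReal * F a := by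
  have hne : p.toOuterMeasure s ≠ 0 := by
    obtain ⟨a, has, hap⟩ := h
    rw [Ne, toOuterMeasure_apply_eq_zero_iff, Set.not_disjoint_iff]
    exact ⟨a, hap, has⟩
  rw [toOuterMeasure_apply] at hne ⊢
  have hpos : (∑' a, s.indicator p a).toReal ≠ 0 :=
    ENNReal.toReal_ne_zero.2 ⟨hne, p.tsum_coe_indicator_ne_top s⟩
  rw [mul_sum]
  refine sum_congr rfl fun a _ => ?_
  rw [filter_apply, ENNReal.toReal_mul, ENNReal.toReal_inv]
  field_simp

open Classical in
noncomputable def condLaw (μ : PMF α) (k : α → γ) (f : α → β) (y : γ) : PMF β :=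
  if h : ∃ a ∈ k ⁻¹' {y}, a ∈ μ.support then (μ.filter (k ⁻¹' {y}) h).map f
  else μ.map f

theorem toReal_map_mul_sum_condLaw [Fintype α] [Fintype β] [DecidableEq γ] (μ : PMF α)
    (k : α → γ) (f : α → β) (y : γ) (φ : β → ℝ) :
    (μ.map k y).toReal * ∑ x, (condLaw μ k f y x).toReal * φ x
      = ∑ a with k a = y, (μ a).toReal * φ (f a) := by
  classical
  unfold condLaw
  split_ifs with h
  · rw [sum_map_toReal_mul, ← toOuterMeasure_apply_singleton, toOuterMeasure_map_apply,
      toReal_toOuterMeasure_mul_sum_filter, sum_filter]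
    refine sum_congr rfl fun a _ => ?_
    rw [Set.indicator_apply]
    split_ifs <;> simp_all
  · push Not at h
    have hμ : ∀ a, k a = y → μ a = 0 := fun a ha => (μ.apply_eq_zero_iff a).2 (h a ha)
    rw [← toOuterMeasure_apply_singleton, toOuterMeasure_map_apply,
      (toOuterMeasure_apply_eq_zero_iff _ _).2 ?_, ENNReal.toReal_zero, zero_mul]
    · exact (sum_eq_zero fun a ha => by simp [hμ a (mem_filter.1 ha).2]).symm
    · exact Set.disjoint_left.2 fun a ha hk => ha (hμ a hk)

theorem sum_toReal_mul_sum_condLaw [Fintype α] [Fintype β] [Fintype γ] {μ : PMF α}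
    {g k : α → γ} (hgk : μ.map g = μ.map k) (f : α → β) (h : β → γ → ℝ) :
    ∑ a, (μ a).toReal * ∑ x, (condLaw μ k f (g a) x).toReal * h x (g a)
      = ∑ a, (μ a).toReal * h (f a) (k a) := by
  classical
  rw [← sum_map_toReal_mul μ g fun y => ∑ x, (condLaw μ k f y x).toReal * h x y, hgk]
  simp_rw [toReal_map_mul_sum_condLaw]
  rw [← sum_fiberwise univ k fun a => (μ a).toReal * h (f a) (k a)]
  exact sum_congr rfl fun y _ => sum_congr rfl fun a ha => by rw [(mem_filter.1 ha).2]

theorem sum_toReal_mul_sub_le_of_lipschitzWith [Fintype α] [PseudoMetricSpace α] (p : PMF α)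
    {φ : α → ℝ} (hφ : LipschitzWith 1 φ) (y z : α) :
    ∑ x, (p x).toReal * (φ x - φ z) ≤ ∑ x, (p x).toReal * dist x y + (φ y - φ z) := by
  calc ∑ x, (p x).toReal * (φ x - φ z)
      = ∑ x, (p x).toReal * (φ x - φ y) + (∑ x, (p x).toReal) * (φ y - φ z) := by
        rw [sum_mul, ← sum_add_distrib]
        exact sum_congr rfl fun x _ => by ring
    _ ≤ ∑ x, (p x).toReal * dist x y + (φ y - φ z) := by
        rw [sum_toReal_eq_one, one_mul]
        gcongr with x
        have hxy := hφ.le_add_mul x y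
        rw [NNReal.coe_one, one_mul] at hxy
        linarith

end PMF

theorem extended_impossibility_theorem_general {𝒳 𝒞 : Type*} [Fintype 𝒳]
    [MetricSpace 𝒳] [Fintype 𝒞] (μ : PMF 𝒞) (f : 𝒞 → 𝒳) (L : 𝒳 → 𝒞 → ℝ)
    (hL : ∀ c, LipschitzWith 1 (fun x => L x c))
    (q : PMF 𝒳) (ε' : ℝ)
    (hgt : ∃ gt : 𝒞 → 𝒳, μ.map gt = q ∧
      ∑ c, (μ c).toReal * dist (f c) (gt c) ≤ ε') :
    ∃ Erase : 𝒳 → PMF 𝒳,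
      ∀ (g : 𝒞 → 𝒳), μ.map g = q →
      ∀ (Detect : 𝒳 → Bool) (ε δ : ℝ), 0 ≤ ε → 0 ≤ δ → δ ≤ 1 →
        (∑ c, (μ c).toReal * (L (g c) c - L (f c) c)) ≤ ε →
        (1 - δ ≤ ∑ c, (μ c).toReal * (if Detect (f c) = false then 1 else 0)) →
        (1 - δ ≤ ∑ c, (μ c).toReal *
            ∑ x, ((Erase (g c)) x).toReal * (if Detect x = false then 1 else 0)) ∧
        (∑ c, (μ c).toReal *
            ∑ x, ((Erase (g c)) x).toReal * (L x c - L (f c) c)) ≤ ε + ε' := by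
  obtain ⟨gt, hgt_map, hgt_dist⟩ := hgt
  refine ⟨μ.condLaw gt f, fun g hg Detect ε δ _ _ _ hloss hdet => ?_⟩
  have hlaw : μ.map g = μ.map gt := hg.trans hgt_map.symm
  constructor
  · exact hdet.trans_eq (PMF.sum_toReal_mul_sum_condLaw hlaw f
      fun x _ => if Detect x = false then 1 else 0).symm
  · calc ∑ c, (μ c).toReal * ∑ x, (μ.condLaw gt f (g c) x).toReal * (L x c - L (f c) c)
        ≤ ∑ c, (μ c).toReal * (∑ x, (μ.condLaw gt f (g c) x).toReal * dist x (g c)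
            + (L (g c) c - L (f c) c)) := by
          gcongr with c
          exact (μ.condLaw gt f (g c)).sum_toReal_mul_sub_le_of_lipschitzWith (hL c) _ _
      _ = ∑ c, (μ c).toReal * ∑ x, (μ.condLaw gt f (g c) x).toReal * dist x (g c)
            + ∑ c, (μ c).toReal * (L (g c) c - L (f c) c) := by
          simp only [mul_add, sum_add_distrib]
      _ = ∑ c, (μ c).toReal * dist (f c) (gt c)
            + ∑ c, (μ c).toReal * (L (g c) c - L (f c) c) := by
          rw [PMF.sum_toReal_mul_sum_condLaw hlaw f dist]
      _ ≤ ε + ε' := by linarith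

/-- Extended impossibility theorem (Theorem 3, finite version): there exists a
randomized erasing function, depending only on `f`, `μ`, and the watermark
output distribution `q`, that erases any watermark with output distribution `q`
while keeping the detection false rate at least `1 - δ` and increasing the
expected loss by at most `ε'`. -/
theorem extended_impossibility_theorem {𝒳 𝒞 : Type*} [Fintype 𝒳] [Nonempty 𝒳]
    [MetricSpace 𝒳] [Fintype 𝒞] (μ : PMF 𝒞) (f : 𝒞 → 𝒳) (L : 𝒳 → 𝒞 → ℝ)
    (hL : ∀ c, LipschitzWith 1 (fun x => L x c))
    (q : PMF 𝒳) (ε' : ℝ) (hε' : 0 ≤ ε')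
    (hgt : ∃ gt : 𝒞 → 𝒳, μ.map gt = q ∧
      ∑ c, (μ c).toReal * dist (f c) (gt c) ≤ ε') :
    ∃ Erase : 𝒳 → PMF 𝒳,
      ∀ (g : 𝒞 → 𝒳), μ.map g = q →
      ∀ (Detect : 𝒳 → Bool) (ε δ : ℝ), 0 ≤ ε → 0 ≤ δ → δ ≤ 1 →
        (∑ c, (μ c).toReal * (L (g c) c - L (f c) c)) ≤ ε →
        (1 - δ ≤ ∑ c, (μ c).toReal * (if Detect (f c) = false then 1 else 0)) →
        (1 - δ ≤ ∑ c, (μ c).toReal *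
            ∑ x, ((Erase (g c)) x).toReal * (if Detect x = false then 1 else 0)) ∧
        (∑ c, (μ c).toReal *
            ∑ x, ((Erase (g c)) x).toReal * (L x c - L (f c) c)) ≤ ε + ε' :=
  extended_impossibility_theorem_general μ f L hL q ε' hgt
end

section
/- Counterexample showing the dependence on q in Theorem 3 is necessary: Let n ≥ 1, let 𝒳 = {0, 1, ..., n}, and let ν be the uniform PMF on {1, ..., n}. For every function Erase : 𝒳 → 𝒳 there exists a detection function Detect : 𝒳 → Bool such that: (i) Detect(0) = true, (ii) Detect(Erase(0)) = true, and (iii) Pr_{c~ν}[Detect(c) = true] ≤ 1/n. (Hence, with the generator f(c) = c and the watermark g(c) = 0, the watermark has false positive rate at most 1/n and is detected with probability 1, yet Erase fails to remove it with probability 1.) -/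
/-- Counterexample showing the dependence on `q` in Theorem 3 is necessary:
no single erasing function works against every watermark.  Here `𝒳 = Fin (n+1)`
is the set of texts `{0, 1, …, n}` and `ν` is the uniform PMF on `{1, …, n}`
(the distribution of the generated text `f(C) = C` for `C ~ ν`). -/
theorem erase_needs_q (n : ℕ) (hn : 1 ≤ n) (ν : PMF (Fin (n + 1)))
    (hν : ∀ c, ν c = if c = 0 then 0 else (n : ENNReal)⁻¹) :
    ∀ Erase : Fin (n + 1) → Fin (n + 1),
      ∃ Detect : Fin (n + 1) → Bool,
        Detect 0 = true ∧ Detect (Erase 0) = true ∧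
        ν.toOuterMeasure {c | Detect c = true} ≤ (n : ENNReal)⁻¹ := by
  intro Erase
  refine ⟨fun c => decide (c = 0 ∨ c = Erase 0), by simp, by simp, ?_⟩
  have hset : {c : Fin (n+1) | (decide (c = 0 ∨ c = Erase 0) : Bool) = true}
      ⊆ ({0} : Set (Fin (n+1))) ∪ {Erase 0} := by
    intro c hc
    simp only [Set.mem_setOf_eq, decide_eq_true_eq] at hc
    rcases hc with h | h <;> simp [h]
  calc ν.toOuterMeasure {c | (decide (c = 0 ∨ c = Erase 0) : Bool) = true}
      ≤ ν.toOuterMeasure (({0} : Set (Fin (n+1))) ∪ {Erase 0}) :=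
        ν.toOuterMeasure.mono hset
    _ ≤ ν.toOuterMeasure {0} + ν.toOuterMeasure {Erase 0} :=
        MeasureTheory.measure_union_le _ _
    _ = ν 0 + ν (Erase 0) := by
        rw [PMF.toOuterMeasure_apply_singleton, PMF.toOuterMeasure_apply_singleton]
    _ ≤ 0 + (n : ENNReal)⁻¹ := by
        rw [hν, hν, if_pos rfl]
        exact add_le_add le_rfl (by split <;> simp)
    _ = (n : ENNReal)⁻¹ := by rw [zero_add]
end

section
/- Correctness of the Easymark steganography (Algorithms 1 and 2): Let p ≥ 2, let u : Fin p → ℕ be an injective assignment of codepoints such that u(i) ≠ 32 for all i and no element of the text x : List ℕ lies in the range of u. Let m : ℕ and let m_1, ..., m_k ∈ {0, ..., p−1} (most significant digit first, without leading zeros) be the base-p representation of m. Define encode(x, m) as the text obtained from x by replacing the i-th occurrence of the codepoint 32 with u(m_i) for i = 1, ..., k, leaving all other characters unchanged, and define decode(s) as the result of folding over s starting from 0, updating the accumulator a to p·a + i whenever the current character equals u(i) and leaving a unchanged otherwise. If x contains at least k occurrences of the codepoint 32, then decode(encode(x, m)) = m. -/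
/-- Algorithm 1 (Steganography Encode): replace the `i`-th occurrence of the
whitespace codepoint 32 with `u dᵢ`, where `d₁, …, d_k` is the list of digits
to embed; all other characters are left unchanged. -/
def stegEncode {p : ℕ} (u : Fin p → ℕ) : List (Fin p) → List ℕ → List ℕ
  | _, [] => []
  | [], c :: rest => c :: stegEncode u [] rest
  | d :: ds, c :: rest =>
      if c = 32 then u d :: stegEncode u ds rest
      else c :: stegEncode u (d :: ds) rest

/-- Algorithm 2 (Steganography Decode): fold over the text starting from `0`,
updating the accumulator `a` to `p * a + i` whenever the current character
equals `u i`, and leaving `a` unchanged otherwise. -/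
def stegDecode {p : ℕ} (u : Fin p → ℕ) (s : List ℕ) : ℕ :=
  s.foldl (fun a c =>
    match (List.finRange p).find? (fun i => u i == c) with
    | some i => p * a + (i : ℕ)
    | none => a) 0

lemma find?_u_eq {p : ℕ} (u : Fin p → ℕ) (hu : Function.Injective u) (d : Fin p) :
    (List.finRange p).find? (fun i => u i == u d) = some d := by
  have h1 : ((List.finRange p).find? (fun i => u i == u d)).isSome := by
    apply List.find?_isSome.2
    exact ⟨d, List.mem_finRange d, by simp⟩
  obtain ⟨i, hi⟩ := Option.isSome_iff_exists.1 h1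
  have := List.find?_some hi
  have : i = d := hu (by simpa using this)
  rw [hi, this]

lemma find?_u_none {p : ℕ} (u : Fin p → ℕ) (c : ℕ) (hc : ∀ i, u i ≠ c) :
    (List.finRange p).find? (fun i => u i == c) = none := by
  apply List.find?_eq_none.2
  intro i _
  simpa using hc i

lemma steg_fold {p : ℕ} (u : Fin p → ℕ) (hu : Function.Injective u)
    (hu32 : ∀ i, u i ≠ 32) :
    ∀ (x : List ℕ) (ds : List (Fin p)) (a : ℕ),
    (∀ c ∈ x, ∀ i, u i ≠ c) → ds.length ≤ x.count 32 →
    (stegEncode u ds x).foldl (fun a c =>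
      match (List.finRange p).find? (fun i => u i == c) with
      | some i => p * a + (i : ℕ)
      | none => a) a
    = ds.foldl (fun a d => p * a + (d : ℕ)) a := by
  intro x
  induction x with
  | nil =>
    intro ds a _ hk
    simp at hk
    subst hk
    simp [stegEncode]
  | cons c rest ih =>
    intro ds a hx hk
    match ds with
    | [] =>
      simp only [stegEncode, List.foldl_cons]
      rw [find?_u_none u c (hx c List.mem_cons_self)]
      exact ih [] a (fun c hc => hx c (List.mem_cons_of_mem _ hc)) (by simp)
    | d :: ds' =>
      by_cases hc : c = 32
      · simp only [stegEncode, if_pos hc, List.foldl_cons]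
        rw [find?_u_eq u hu d]
        refine ih ds' (p * a + d) (fun c hc => hx c (List.mem_cons_of_mem _ hc)) ?_
        simp [List.count_cons, hc] at hk
        omega
      · simp only [stegEncode, if_neg hc, List.foldl_cons]
        rw [find?_u_none u c (hx c List.mem_cons_self)]
        refine ih (d :: ds') a (fun c hc => hx c (List.mem_cons_of_mem _ hc)) ?_
        simpa [List.count_cons, hc] using hk

lemma foldl_msb (p : ℕ) : ∀ (l : List ℕ) (a : ℕ),
    l.foldl (fun a d => p * a + d) a = a * p ^ l.length + Nat.ofDigits p l.reverse := by
  intro l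
  induction l with
  | nil => simp [Nat.ofDigits]
  | cons d t ih =>
    intro a
    simp only [List.foldl_cons, List.reverse_cons, ih]
    rw [Nat.ofDigits_append]
    simp [Nat.ofDigits, pow_succ]
    ring

/-- Correctness of the Easymark steganography: if `ds` is the base-`p`
representation of `m` (most significant digit first, no leading zeros), `u` is
injective, never produces the whitespace 32, no character of `x` lies in the
range of `u`, and `x` contains at least `ds.length` whitespaces, then decoding
the encoded text recovers `m`. -/
theorem steganography_correct (p : ℕ) (hp : 2 ≤ p) (u : Fin p → ℕ)
    (hu : Function.Injective u) (hu32 : ∀ i, u i ≠ 32)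
    (x : List ℕ) (hx : ∀ c ∈ x, ∀ i, u i ≠ c)
    (m : ℕ) (ds : List (Fin p))
    (hds : ds.map (fun i => (i : ℕ)) = (Nat.digits p m).reverse)
    (hk : ds.length ≤ x.count 32) :
    stegDecode u (stegEncode u ds x) = m := by
  unfold stegDecode
  rw [steg_fold u hu hu32 x ds 0 hx hk]
  have hmap : ds.foldl (fun a d => p * a + (d : ℕ)) 0
      = (ds.map (fun i => (i : ℕ))).foldl (fun a d => p * a + d) 0 := by
    rw [List.foldl_map]
  rw [hmap, hds, foldl_msb, List.reverse_reverse]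
  simp [Nat.ofDigits_digits]
end
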